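/- Chernoff-type tail bound for sums of exponentials with linearly growing rates: Let K > 0, let w₀ be a nonnegative integer, and let (U_j)_{j>w₀} be independent random variables with U_j exponentially distributed with rate λ_j satisfying 0 < λ_j ≤ 2Kj. Then for every t > 0, every λ > 0 and every integer m > w₀: P(U_{w₀+1} + ⋯ + U_m < t) ≤ exp(λt)·((2K(w₀+1)+λ)/(2Km+λ))^{λ/(2K)}. -/

import Mathlib

/-!
By Markov's inequality for `exp (-λ S)`, the probability is at most
`exp (λ t) * E[exp (-λ S)] = exp (λ t) * ∏ λ_j / (λ_j + λ)`. With `c = 2K`, each factor is at most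
`cj / (cj + λ) ≤ exp (-λ / (cj + λ)) ≤ ((cj + λ) / (c(j+1) + λ)) ^ (λ / c)`, by `1 - x ≤ exp (-x)`
and `log (1 + x) ≤ x`, and the last product telescopes.
-/

open MeasureTheory ProbabilityTheory Real

lemma exponentialPDF_mul_ofReal_exp {r t : ℝ} (hr : 0 ≤ r) (ht : t < r) (x : ℝ) :
    exponentialPDF r x * ENNReal.ofReal (exp (t * x))
      = ENNReal.ofReal (r / (r - t)) * exponentialPDF (r - t) x := by
  rcases le_or_gt 0 x with hx | hx
  · have hrt : r - t ≠ 0 := (sub_pos.2 ht).ne'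
    rw [exponentialPDF_of_nonneg hx, exponentialPDF_of_nonneg hx,
      ← ENNReal.ofReal_mul (by positivity), ← ENNReal.ofReal_mul (by positivity)]
    congr 1
    rw [mul_assoc, ← exp_add]
    field_simp
    ring_nf
  · simp [exponentialPDF_of_neg hx]

lemma lintegral_ofReal_exp_mul_expMeasure {r t : ℝ} (hr : 0 < r) (ht : t < r) :
    ∫⁻ x, ENNReal.ofReal (exp (t * x)) ∂expMeasure r = ENNReal.ofReal (r / (r - t)) := by
  change ∫⁻ x, _ ∂volume.withDensity (exponentialPDF r) = _
  rw [lintegral_withDensity_eq_lintegral_mul _ (f := exponentialPDF r)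
    (measurable_exponentialPDFReal r).ennreal_ofReal (by fun_prop)]
  simp_rw [Pi.mul_apply, exponentialPDF_mul_ofReal_exp hr.le ht]
  rw [lintegral_const_mul' _ _ ENNReal.ofReal_ne_top,
    lintegral_exponentialPDF_eq_one (sub_pos.2 ht), mul_one]

lemma mgf_id_expMeasure {r t : ℝ} (hr : 0 < r) (ht : t < r) :
    mgf id (expMeasure r) t = r / (r - t) := by
  rw [mgf, integral_eq_lintegral_of_nonneg_ae (ae_of_all _ fun x => (exp_pos _).le)
    (by fun_prop), ← ENNReal.toReal_ofReal (div_pos hr (sub_pos.2 ht)).le]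
  exact congrArg ENNReal.toReal (lintegral_ofReal_exp_mul_expMeasure hr ht)

section ExponentialLaw

variable {Ω : Type*} [MeasurableSpace Ω] {μ : Measure Ω} {X : Ω → ℝ} {r : ℝ}

lemma aemeasurable_of_map_eq_expMeasure (hr : 0 < r) (hX : μ.map X = expMeasure r) :
    AEMeasurable X μ :=
  have : IsProbabilityMeasure (μ.map X) := hX ▸ isProbabilityMeasure_expMeasure hr
  AEMeasurable.of_map_ne_zero (IsProbabilityMeasure.ne_zero _)

lemma mgf_of_map_eq_expMeasure {t : ℝ} (hr : 0 < r) (ht : t < r) (hX : μ.map X = expMeasure r) :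
    mgf X μ t = r / (r - t) := by
  rw [← mgf_id_map (aemeasurable_of_map_eq_expMeasure hr hX), hX, mgf_id_expMeasure hr ht]

end ExponentialLaw

lemma ProbabilityTheory.iIndepFun.mgf_finsetSum {Ω ι : Type*} [MeasurableSpace Ω]
    {μ : Measure Ω} {X : ι → Ω → ℝ} (h : iIndepFun X μ) {s : Finset ι}
    (hX : ∀ i ∈ s, AEMeasurable (X i) μ) (t : ℝ) :
    mgf (∑ i ∈ s, X i) μ t = ∏ i ∈ s, mgf (X i) μ t := by
  -- only the `X i` with `i ∈ s` are measurable, so pass to the family indexed by `s`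
  have := (h.precomp Subtype.val_injective).mgf_sum₀ (fun i : s => hX i i.2) Finset.univ (t := t)
  simpa only [Function.comp_apply, Finset.sum_coe_sort s X,
    Finset.prod_coe_sort s fun i => mgf (X i) μ t] using this

lemma measure_lt_le_exp_mul_mgf {Ω : Type*} [MeasurableSpace Ω] {μ : Measure Ω}
    [IsProbabilityMeasure μ] {X : Ω → ℝ} {l : ℝ} (ε : ℝ) (hl : 0 ≤ l) (hpos : 0 < mgf X μ (-l)) :
    μ {ω | X ω < ε} ≤ ENNReal.ofReal (exp (l * ε) * mgf X μ (-l)) := by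
  calc μ {ω | X ω < ε} ≤ μ {ω | X ω ≤ ε} := measure_mono fun _ hω => le_of_lt (α := ℝ) hω
    _ = ENNReal.ofReal (μ.real {ω | X ω ≤ ε}) := (ofReal_measureReal).symm
    _ ≤ _ := by
      gcongr
      simpa only [neg_neg] using
        measure_le_le_exp_mul_mgf ε (neg_nonpos.2 hl) (mgf_pos_iff.1 hpos)

lemma div_add_le_rpow_div {c l x y : ℝ} (hc : 0 < c) (hl : 0 < l) (hy : 0 ≤ y) (hyx : y ≤ x) :
    y / (y + l) ≤ ((x + l) / (x + c + l)) ^ (l / c) := by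
  have hx : 0 ≤ x := hy.trans hyx
  have hxl : 0 < x + l := by linarith
  have hlog : -(c / (x + l)) ≤ log ((x + l) / (x + c + l)) := by
    have h := log_le_sub_one_of_pos (by positivity : 0 < (x + c + l) / (x + l))
    have h' : (x + c + l) / (x + l) - 1 = c / (x + l) := by field_simp; ring
    rw [← inv_div (x + c + l), log_inv]
    linarith
  calc y / (y + l) ≤ x / (x + l) := by
        rw [div_le_div_iff₀ (by linarith) hxl]; nlinarith
    _ = 1 - l / (x + l) := by field_simp; ring
    _ ≤ exp (-(l / (x + l))) := by linarith [add_one_le_exp (-(l / (x + l)))]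
    _ = exp (-(c / (x + l)) * (l / c)) := by congr 1; field_simp
    _ ≤ exp (log ((x + l) / (x + c + l)) * (l / c)) := by gcongr
    _ = ((x + l) / (x + c + l)) ^ (l / c) := (rpow_def_of_pos (by positivity) _).symm

lemma prod_div_add_le_rpow {c l : ℝ} (hc : 0 < c) (hl : 0 < l) {r : ℕ → ℝ} {a m : ℕ}
    (ham : a ≤ m) (hr : ∀ j ∈ Finset.Icc a m, 0 ≤ r j ∧ r j ≤ c * j) :
    ∏ j ∈ Finset.Icc a m, r j / (r j + l) ≤ ((c * a + l) / (c * (m + 1) + l)) ^ (l / c) := by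
  have factor_le (j : ℕ) (hj : 0 ≤ r j ∧ r j ≤ c * j) :
      r j / (r j + l) ≤ ((c * j + l) / (c * (j + 1) + l)) ^ (l / c) := by
    simpa only [mul_add_one, add_right_comm _ c] using div_add_le_rpow_div hc hl hj.1 hj.2
  induction m, ham using Nat.le_induction with
  | base => simpa using factor_le a (hr a (by simp))
  | succ n han ih =>
    rw [Finset.prod_Icc_succ_top (by omega)]
    have hIcc : Finset.Icc a n ⊆ Finset.Icc a (n + 1) := Finset.Icc_subset_Icc_right (by omega)
    calc (∏ j ∈ Finset.Icc a n, r j / (r j + l)) * (r (n + 1) / (r (n + 1) + l))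
        ≤ ((c * a + l) / (c * (n + 1) + l)) ^ (l / c)
            * ((c * (n + 1 : ℕ) + l) / (c * ((n + 1 : ℕ) + 1) + l)) ^ (l / c) := by
          have hn := hr (n + 1) (Finset.mem_Icc.2 ⟨by omega, le_rfl⟩)
          exact mul_le_mul (ih fun j hj => hr j (hIcc hj)) (factor_le _ hn)
            (div_nonneg hn.1 (by linarith)) (by positivity)
      _ = ((c * a + l) / (c * ((n + 1 : ℕ) + 1) + l)) ^ (l / c) := by
          push_cast
          rw [← mul_rpow (by positivity) (by positivity), div_mul_div_cancel₀ (by positivity)]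

theorem chernoff_tail_bound_exponentials_general
    {Ω : Type*} [MeasurableSpace Ω] (μ : Measure Ω) [IsProbabilityMeasure μ]
    (K : ℝ) (hK : 0 < K) (w₀ : ℕ)
    (U : ℕ → Ω → ℝ) (lam : ℕ → ℝ)
    (hlam : ∀ j : ℕ, w₀ < j → 0 < lam j ∧ lam j ≤ 2 * K * j)
    (hind : iIndepFun U μ)
    (hlaw : ∀ j : ℕ, w₀ < j → Measure.map (U j) μ = expMeasure (lam j))
    (t lmb : ℝ) (hlmb : 0 < lmb)
    (m : ℕ) (hm : w₀ < m) :
    μ {ω | ∑ j ∈ Finset.Icc (w₀ + 1) m, U j ω < t}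
      ≤ ENNReal.ofReal (Real.exp (lmb * t) *
          ((2 * K * ((w₀ : ℝ) + 1) + lmb) / (2 * K * (m : ℝ) + lmb))
            ^ (lmb / (2 * K))) := by
  set S := Finset.Icc (w₀ + 1) m
  have hlamS (j : ℕ) (hj : j ∈ S) := hlam j (Finset.mem_Icc.1 hj).1
  have hlawS (j : ℕ) (hj : j ∈ S) := hlaw j (Finset.mem_Icc.1 hj).1
  have hmgf : mgf (∑ j ∈ S, U j) μ (-lmb) = ∏ j ∈ S, lam j / (lam j + lmb) := by
    rw [hind.mgf_finsetSum fun j hj =>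
      aemeasurable_of_map_eq_expMeasure (hlamS j hj).1 (hlawS j hj)]
    refine Finset.prod_congr rfl fun j hj => ?_
    rw [mgf_of_map_eq_expMeasure (hlamS j hj).1 (by linarith [(hlamS j hj).1]) (hlawS j hj),
      sub_neg_eq_add]
  have hmgf_pos : 0 < mgf (∑ j ∈ S, U j) μ (-lmb) :=
    hmgf ▸ Finset.prod_pos fun j hj => have := (hlamS j hj).1; by positivity
  have hprod := prod_div_add_le_rpow (by positivity) hlmb (Nat.succ_le_of_lt hm)
    fun j hj => ⟨(hlamS j hj).1.le, (hlamS j hj).2⟩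
  have hchernoff := measure_lt_le_exp_mul_mgf t hlmb.le hmgf_pos
  simp only [Finset.sum_apply] at hchernoff
  refine hchernoff.trans (ENNReal.ofReal_le_ofReal ?_)
  rw [hmgf]
  gcongr
  refine hprod.trans ?_
  push_cast
  gcongr
  linarith

/-- Chernoff-type tail bound for sums of independent exponentials with rates
`0 < λ_j ≤ 2Kj` for `j > w₀`. -/
theorem chernoff_tail_bound_exponentials
    {Ω : Type*} [MeasurableSpace Ω] (μ : Measure Ω) [IsProbabilityMeasure μ]
    (K : ℝ) (hK : 0 < K) (w₀ : ℕ)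
    (U : ℕ → Ω → ℝ) (lam : ℕ → ℝ)
    (hlam : ∀ j : ℕ, w₀ < j → 0 < lam j ∧ lam j ≤ 2 * K * j)
    (hind : iIndepFun U μ)
    (hlaw : ∀ j : ℕ, w₀ < j → Measure.map (U j) μ = expMeasure (lam j))
    (t lmb : ℝ) (ht : 0 < t) (hlmb : 0 < lmb)
    (m : ℕ) (hm : w₀ < m) :
    μ {ω | ∑ j ∈ Finset.Icc (w₀ + 1) m, U j ω < t}
      ≤ ENNReal.ofReal (Real.exp (lmb * t) *
          ((2 * K * ((w₀ : ℝ) + 1) + lmb) / (2 * K * (m : ℝ) + lmb))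
            ^ (lmb / (2 * K))) :=
  chernoff_tail_bound_exponentials_general μ K hK w₀ U lam hlam hind hlaw t lmb hlmb m hm
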